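/- Consider n firms and m goods with budgets K_i > 0 and valuations v_{ij} > 0, and let F(b) = −∑_{i,j} b_{ij}·ln v_{ij} + ∑_i (K_i − ∑_j b_{ij}) + ∑_j p_j(b)·ln p_j(b) on C, where p_j(b) = ∑_i b_{ij}. Then F is 1-Bregman convex with respect to the KL divergence on C: for every b′ ∈ C and every b ∈ C with all entries strictly positive, 0 ≤ F(b′) − F(b) − ∑_{i,j} (b′_{ij} − b_{ij})·(ln p_j(b) − ln v_{ij}) ≤ KL(b′‖b). -/

import Mathlib

/-!
Writing `h x = x * log x - x`, the objective is an affine function of `b` plus `∑ j, h (p_j b)`,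
and `∇F` is exactly the gradient of that expression (the budget term supplies the `-x` in `h`).
So the Bregman gap of `F` at `(b', b)` is the Bregman gap of `h` summed over goods, i.e. the
KL divergence between the price vectors `p b'` and `p b`. It is nonnegative, and it is at most
`KL(b'‖b)` by the log-sum inequality applied to each column `i ↦ (b' i j, b i j)`.
-/

open Real Finset InformationTheory

lemma mul_log_div_eq {x y : ℝ} (hy : y ≠ 0) : x * log (x / y) = x * log x - x * log y := by
  rcases eq_or_ne x 0 with rfl | hx
  · simp
  · rw [log_div hx hy, mul_sub]

lemma mul_klFun_div {x y : ℝ} (hy : y ≠ 0) : y * klFun (x / y) = x * log (x / y) - x + y := by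
  rw [klFun_apply]
  field_simp
  ring

/-- The log-sum inequality, as Jensen's inequality for `klFun` with weights `g i`. -/
lemma mul_klFun_sum_div_sum_le {ι : Type*} (s : Finset ι) {f g : ι → ℝ}
    (hf : ∀ i ∈ s, 0 ≤ f i) (hg : ∀ i ∈ s, 0 < g i) :
    (∑ i ∈ s, g i) * klFun ((∑ i ∈ s, f i) / ∑ i ∈ s, g i) ≤ ∑ i ∈ s, g i * klFun (f i / g i) := by
  rcases s.eq_empty_or_nonempty with rfl | hs
  · simp
  have hT : 0 < ∑ i ∈ s, g i := sum_pos hg hs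
  have hmean : s.centerMass g (fun i => f i / g i) = (∑ i ∈ s, f i) / ∑ i ∈ s, g i := by
    rw [centerMass, inv_smul_eq_iff₀ hT.ne', smul_eq_mul, mul_div_cancel₀ _ hT.ne']
    exact sum_congr rfl fun i hi => by rw [smul_eq_mul, mul_div_cancel₀ _ (hg i hi).ne']
  have hjensen := convexOn_klFun.map_centerMass_le (fun i hi => (hg i hi).le) hT
    fun i hi => Set.mem_Ici.2 (div_nonneg (hf i hi) (hg i hi).le)
  rw [hmean, centerMass, smul_eq_mul, le_inv_mul_iff₀ hT] at hjensen
  simpa only [smul_eq_mul, Function.comp] using hjensen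

section FisherMarket

variable {ι κ : Type*} [Fintype ι] [Fintype κ]

noncomputable def marketObjective (K : ι → ℝ) (v b : ι → κ → ℝ) : ℝ :=
  -(∑ i, ∑ j, b i j * log (v i j)) + ∑ i, (K i - ∑ j, b i j) +
    ∑ j, (∑ i, b i j) * log (∑ i, b i j)

lemma marketObjective_bregman_eq (K : ι → ℝ) (v b' b : ι → κ → ℝ)
    (hb : ∀ j, ∑ i, b i j ≠ 0) :
    marketObjective K v b' - marketObjective K v b -
        ∑ i, ∑ j, (b' i j - b i j) * (log (∑ i, b i j) - log (v i j)) =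
      ∑ j, (∑ i, b i j) * klFun ((∑ i, b' i j) / ∑ i, b i j) := by
  simp only [marketObjective, mul_klFun_div (hb _), mul_log_div_eq (hb _)]
  rw [sum_comm (f := fun i j => (b' i j - b i j) * _)]
  simp only [sum_sub_distrib, sum_add_distrib, mul_sub, sub_mul, ← sum_mul]
  rw [sum_comm (f := fun i j => b' i j * log (v i j)), sum_comm (f := fun i j => b i j * log (v i j)),
    sum_comm (f := fun i j => b' i j), sum_comm (f := fun i j => b i j)]
  ring

lemma sum_sum_mul_log_div_sub_add_eq (u w : ι → κ → ℝ) (hw : ∀ i j, w i j ≠ 0) :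
    (∑ i, ∑ j, u i j * log (u i j / w i j)) - ∑ i, ∑ j, u i j + ∑ i, ∑ j, w i j =
      ∑ j, ∑ i, w i j * klFun (u i j / w i j) := by
  simp only [mul_klFun_div (hw _ _), sum_add_distrib, sum_sub_distrib]
  rw [sum_comm (f := fun i j => u i j * log (u i j / w i j)), sum_comm (f := fun i j => u i j),
    sum_comm (f := fun i j => w i j)]

end FisherMarket

theorem F_one_bregman_convex_general
    (n m : ℕ) (K : Fin n → ℝ) (v : Fin n → Fin m → ℝ)
    (p : (Fin n → Fin m → ℝ) → Fin m → ℝ)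
    (hp : ∀ b j, p b j = ∑ i, b i j)
    (C : Set (Fin n → Fin m → ℝ))
    (hC : C = {b | (∀ i j, 0 ≤ b i j) ∧ ∀ i, ∑ j, b i j ≤ K i})
    (F : (Fin n → Fin m → ℝ) → ℝ)
    (hF : ∀ b, F b = -(∑ i, ∑ j, b i j * Real.log (v i j)) +
      (∑ i, (K i - ∑ j, b i j)) + ∑ j, p b j * Real.log (p b j))
    (KL : (Fin n → Fin m → ℝ) → (Fin n → Fin m → ℝ) → ℝ)
    (hKL : ∀ u w, KL u w = (∑ i, ∑ j, u i j * Real.log (u i j / w i j)) -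
      (∑ i, ∑ j, u i j) + ∑ i, ∑ j, w i j)
    (b' b : Fin n → Fin m → ℝ) (hb' : b' ∈ C)
    (hbpos : ∀ i j, 0 < b i j) :
    0 ≤ F b' - F b -
        ∑ i, ∑ j, (b' i j - b i j) * (Real.log (p b j) - Real.log (v i j)) ∧
    F b' - F b -
        (∑ i, ∑ j, (b' i j - b i j) * (Real.log (p b j) - Real.log (v i j)))
      ≤ KL b' b := by
  obtain ⟨hb'_nonneg, -⟩ : b' ∈ {b | (∀ i j, 0 ≤ b i j) ∧ ∀ i, ∑ j, b i j ≤ K i} := hC ▸ hb'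
  have hF_eq : F = marketObjective K v := funext fun c => by rw [hF]; simp only [hp]; rfl
  rw [hKL, sum_sum_mul_log_div_sub_add_eq b' b fun i j => (hbpos i j).ne', hF_eq]
  simp only [hp]
  rcases isEmpty_or_nonempty (Fin n) with hn | hn
  · simp [marketObjective]
  have hprice_pos : ∀ j, 0 < ∑ i, b i j := fun j => sum_pos (fun i _ => hbpos i j) univ_nonempty
  rw [marketObjective_bregman_eq K v b' b fun j => (hprice_pos j).ne']
  refine ⟨sum_nonneg fun j _ => ?_, sum_le_sum fun j _ => ?_⟩
  · exact mul_nonneg (hprice_pos j).le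
      (klFun_nonneg (div_nonneg (sum_nonneg fun i _ => hb'_nonneg i j) (hprice_pos j).le))
  · exact mul_klFun_sum_div_sum_le univ (fun i _ => hb'_nonneg i j) fun i _ => hbpos i j

/-- The Fisher-market objective `F` is 1-Bregman convex w.r.t. the
KL divergence: for `b' ∈ C` and strictly positive `b ∈ C`,
`0 ≤ F(b') − F(b) − ⟨∇F(b), b' − b⟩ ≤ KL(b'‖b)`. -/
theorem F_one_bregman_convex
    (n m : ℕ) (K : Fin n → ℝ) (v : Fin n → Fin m → ℝ)
    (hK : ∀ i, 0 < K i) (hv : ∀ i j, 0 < v i j)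
    (p : (Fin n → Fin m → ℝ) → Fin m → ℝ)
    (hp : ∀ b j, p b j = ∑ i, b i j)
    (C : Set (Fin n → Fin m → ℝ))
    (hC : C = {b | (∀ i j, 0 ≤ b i j) ∧ ∀ i, ∑ j, b i j ≤ K i})
    (F : (Fin n → Fin m → ℝ) → ℝ)
    (hF : ∀ b, F b = -(∑ i, ∑ j, b i j * Real.log (v i j)) +
      (∑ i, (K i - ∑ j, b i j)) + ∑ j, p b j * Real.log (p b j))
    (KL : (Fin n → Fin m → ℝ) → (Fin n → Fin m → ℝ) → ℝ)
    (hKL : ∀ u w, KL u w = (∑ i, ∑ j, u i j * Real.log (u i j / w i j)) -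
      (∑ i, ∑ j, u i j) + ∑ i, ∑ j, w i j)
    (b' b : Fin n → Fin m → ℝ) (hb' : b' ∈ C) (hb : b ∈ C)
    (hbpos : ∀ i j, 0 < b i j) :
    0 ≤ F b' - F b -
        ∑ i, ∑ j, (b' i j - b i j) * (Real.log (p b j) - Real.log (v i j)) ∧
    F b' - F b -
        (∑ i, ∑ j, (b' i j - b i j) * (Real.log (p b j) - Real.log (v i j)))
      ≤ KL b' b :=
  F_one_bregman_convex_general n m K v p hp C hC F hF KL hKL b' b hb' hbpos
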